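/- arXiv:2012.14168 — 4 statements merged into one kernel-verified Lean document; each statement's English description precedes it below -/
import Mathlib

section
/- Let (φ,ξ,η) be an almost paracontact almost paracomplex Riemannian structure on a real inner product space (V,g) of dimension 2n+1. Then the associated metric g̃ is a nondegenerate symmetric bilinear form of signature (n+1, n): there exists a basis u₀, u₁, …, u_{2n} of V such that g̃(u_i,u_j) = 0 for i ≠ j, g̃(u_i,u_i) = 1 for 0 ≤ i ≤ n, and g̃(u_i,u_i) = −1 for n+1 ≤ i ≤ 2n. -/
/-! Since `g(x, ξ) = η(x)`, the associated metric is `g̃(x, y) = g(x, ψ y)` with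
`ψ = φ + η ⊗ ξ`. The compatibility of `g` with `φ` makes `φ`, hence `ψ`, `g`-self-adjoint, and
`φ² = 1 - η ⊗ ξ` makes `ψ` an involution. An orthonormal eigenbasis of `ψ` therefore
diagonalizes `g̃` with entries `±1`, and `tr ψ = tr φ + η(ξ) = 1` in dimension `2n + 1` forces
exactly `n + 1` entries `+1`, which come first once the eigenvalues are sorted decreasingly. -/

open RealInnerProductSpace

theorem Fin.sum_ite_val_lt_one_neg_one {m k : ℕ} (hk : k ≤ m) :
    ∑ j : Fin m, (if (j : ℕ) < k then (1 : ℝ) else -1) = 2 * k - m := by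
  obtain ⟨d, rfl⟩ := Nat.exists_eq_add_of_le hk
  rw [Fin.sum_univ_eq_sum_range (fun j => if j < k then (1 : ℝ) else -1), Finset.sum_range_add,
    Finset.sum_congr rfl fun j hj => if_pos (Finset.mem_range.mp hj)]
  simp only [Finset.sum_const, Finset.card_range, nsmul_eq_mul, mul_one, add_lt_iff_neg_left,
    Nat.not_lt_zero, if_false, Nat.cast_add]
  ring

theorem Antitone.eq_one_iff_two_mul_lt_sum_add {m : ℕ} {s : Fin m → ℝ} (hs : Antitone s)
    (hsign : ∀ j, s j = 1 ∨ s j = -1) (i : Fin m) :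
    s i = 1 ↔ 2 * (i : ℝ) < ∑ j, s j + m := by
  -- compare `s` with the sign sequence that drops from `1` to `-1` right after (before) `i`
  constructor
  · intro hi
    have hle : ∀ j : Fin m, (if (j : ℕ) < i + 1 then (1 : ℝ) else -1) ≤ s j := by
      intro j
      split_ifs with hj
      · exact hi ▸ hs (Fin.le_iff_val_le_val.mpr (by omega))
      · rcases hsign j with h | h <;> linarith
    have := Finset.sum_le_sum (s := .univ) fun j _ => hle j
    rw [Fin.sum_ite_val_lt_one_neg_one i.isLt] at this
    push_cast at this
    linarith
  · intro hlt
    refine (hsign i).resolve_right fun hi => ?_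
    have hle : ∀ j : Fin m, s j ≤ if (j : ℕ) < i then (1 : ℝ) else -1 := by
      intro j
      split_ifs with hj
      · rcases hsign j with h | h <;> linarith
      · exact hi ▸ hs (Fin.le_iff_val_le_val.mpr (by omega))
    have := Finset.sum_le_sum (s := .univ) fun j _ => hle j
    rw [Fin.sum_ite_val_lt_one_neg_one i.isLt.le] at this
    linarith

namespace LinearMap.IsSymmetric

variable {𝕜 E : Type*} [RCLike 𝕜] [NormedAddCommGroup E] [InnerProductSpace 𝕜 E]
  [FiniteDimensional 𝕜 E] {T : E →ₗ[𝕜] E} {n : ℕ}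

theorem eigenvalues_eq_one_or_eq_neg_one (hT : T.IsSymmetric) (hTT : ∀ x, T (T x) = x)
    (hn : Module.finrank 𝕜 E = n) (i : Fin n) :
    hT.eigenvalues hn i = 1 ∨ hT.eigenvalues hn i = -1 := by
  obtain ⟨-, hv0⟩ := hT.hasEigenvector_eigenvectorBasis hn i
  have hv := hTT (hT.eigenvectorBasis hn i)
  rw [hT.apply_eigenvectorBasis, map_smul, hT.apply_eigenvectorBasis, smul_smul] at hv
  have hμ :
      ((hT.eigenvalues hn i * hT.eigenvalues hn i : 𝕜) - 1) • hT.eigenvectorBasis hn i = 0 := by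
    rw [sub_smul, one_smul, hv, sub_self]
  rw [smul_eq_zero, sub_eq_zero] at hμ
  exact mul_self_eq_one_iff.mp (by exact_mod_cast hμ.resolve_right hv0)

theorem eigenvalues_eq_one_iff_of_involutive (hT : T.IsSymmetric) (hTT : ∀ x, T (T x) = x)
    (hn : Module.finrank 𝕜 E = n) (i : Fin n) :
    hT.eigenvalues hn i = 1 ↔ 2 * (i : ℝ) < RCLike.re (T.trace 𝕜 E) + n := by
  rw [hT.re_trace_eq_sum_eigenvalues hn]
  exact (hT.eigenvalues_antitone hn).eq_one_iff_two_mul_lt_sum_add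
    (hT.eigenvalues_eq_one_or_eq_neg_one hTT hn) i

end LinearMap.IsSymmetric

section AlmostParacontact

variable {V : Type*} [NormedAddCommGroup V] [InnerProductSpace ℝ V]
  {φ : V →ₗ[ℝ] V} {ξ : V} {η : V →ₗ[ℝ] ℝ}

theorem LinearMap.isSymmetric_smulRight_of_inner_eq (hgξ : ∀ x : V, ⟪x, ξ⟫ = η x) :
    (η.smulRight ξ).IsSymmetric := by
  intro x y
  rw [LinearMap.smulRight_apply, LinearMap.smulRight_apply, real_inner_smul_left,
    real_inner_smul_right, real_inner_comm, hgξ, hgξ, mul_comm]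

theorem isSymmetric_of_almostParacontact (hφφ : ∀ x : V, φ (φ x) = x - η x • ξ)
    (hηφ : ∀ x : V, η (φ x) = 0) (hgφ : ∀ x y : V, ⟪φ x, φ y⟫ = ⟪x, y⟫ - η x * η y)
    (hgξ : ∀ x : V, ⟪x, ξ⟫ = η x) : φ.IsSymmetric := by
  intro x y
  calc ⟪φ x, y⟫ = ⟪φ x, φ (φ y)⟫ := by
        rw [hφφ, inner_sub_right, inner_smul_right, hgξ, hηφ, mul_zero, sub_zero]
    _ = ⟪x, φ y⟫ := by rw [hgφ, hηφ, mul_zero, sub_zero]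

variable (φ ξ η) in
def associatedInvolution : V →ₗ[ℝ] V := φ + η.smulRight ξ

theorem inner_associatedInvolution (hgξ : ∀ x : V, ⟪x, ξ⟫ = η x) (x y : V) :
    ⟪x, associatedInvolution φ ξ η y⟫ = ⟪x, φ y⟫ + η x * η y := by
  rw [associatedInvolution, LinearMap.add_apply, LinearMap.smulRight_apply, inner_add_right,
    inner_smul_right, hgξ, mul_comm]

theorem associatedInvolution_apply_apply (hφξ : φ ξ = 0) (hφφ : ∀ x : V, φ (φ x) = x - η x • ξ)
    (hηφ : ∀ x : V, η (φ x) = 0) (hηξ : η ξ = 1) (x : V) :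
    associatedInvolution φ ξ η (associatedInvolution φ ξ η x) = x := by
  simp only [associatedInvolution, LinearMap.add_apply, LinearMap.smulRight_apply, map_add,
    map_smul, hφφ, hηφ, hφξ, hηξ, zero_smul, one_smul, add_zero, zero_add, sub_add_cancel]

theorem isSymmetric_associatedInvolution (hφφ : ∀ x : V, φ (φ x) = x - η x • ξ)
    (hηφ : ∀ x : V, η (φ x) = 0) (hgφ : ∀ x y : V, ⟪φ x, φ y⟫ = ⟪x, y⟫ - η x * η y)
    (hgξ : ∀ x : V, ⟪x, ξ⟫ = η x) : (associatedInvolution φ ξ η).IsSymmetric :=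
  (isSymmetric_of_almostParacontact hφφ hηφ hgφ hgξ).add
    (LinearMap.isSymmetric_smulRight_of_inner_eq hgξ)

theorem trace_associatedInvolution [FiniteDimensional ℝ V] :
    LinearMap.trace ℝ V (associatedInvolution φ ξ η) = LinearMap.trace ℝ V φ + η ξ := by
  rw [associatedInvolution, map_add, LinearMap.trace_smulRight]

end AlmostParacontact

theorem associated_metric_signature_general
    {n : ℕ} {V : Type*} [NormedAddCommGroup V]
    [InnerProductSpace ℝ V] [FiniteDimensional ℝ V]
    (hdim : Module.finrank ℝ V = 2 * n + 1)
    (φ : V →ₗ[ℝ] V) (ξ : V) (η : V →ₗ[ℝ] ℝ)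
    (hφξ : φ ξ = 0)
    (hφφ : ∀ x : V, φ (φ x) = x - η x • ξ)
    (hηφ : ∀ x : V, η (φ x) = 0)
    (hηξ : η ξ = 1)
    (htr : LinearMap.trace ℝ V φ = 0)
    (hgφ : ∀ x y : V, ⟪φ x, φ y⟫ = ⟪x, y⟫ - η x * η y)
    (hgξ : ∀ x : V, ⟪x, ξ⟫ = η x)
    (gt : V → V → ℝ)
    (hgt : ∀ x y : V, gt x y = ⟪x, φ y⟫ + η x * η y) :
    ∃ u : Module.Basis (Fin (2 * n + 1)) ℝ V,
      (∀ i j : Fin (2 * n + 1), i ≠ j → gt (u i) (u j) = 0) ∧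
      (∀ i : Fin (2 * n + 1), (i : ℕ) ≤ n → gt (u i) (u i) = 1) ∧
      (∀ i : Fin (2 * n + 1), n + 1 ≤ (i : ℕ) → gt (u i) (u i) = -1) := by
  have hψ := isSymmetric_associatedInvolution hφφ hηφ hgφ hgξ
  have hψψ := associatedInvolution_apply_apply hφξ hφφ hηφ hηξ
  set u := hψ.eigenvectorBasis hdim
  set μ := hψ.eigenvalues hdim
  have hgtu : ∀ i j, gt (u i) (u j) = if i = j then μ j else 0 := by
    intro i j
    rw [hgt, ← inner_associatedInvolution hgξ, hψ.apply_eigenvectorBasis, inner_smul_right,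
      u.inner_eq_ite, mul_ite, mul_one, mul_zero, RCLike.ofReal_real_eq_id, id]
  have hμ : ∀ i, μ i = 1 ↔ (i : ℕ) ≤ n := by
    intro i
    rw [hψ.eigenvalues_eq_one_iff_of_involutive hψψ hdim, trace_associatedInvolution, htr, hηξ,
      zero_add, RCLike.re_to_real]
    exact_mod_cast (show 2 * (i : ℕ) < 1 + (2 * n + 1) ↔ (i : ℕ) ≤ n by omega)
  refine ⟨u.toBasis, fun i j hij => ?_, fun i hi => ?_, fun i hi => ?_⟩ <;>
    rw [u.coe_toBasis, hgtu]
  · exact if_neg hij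
  · rw [if_pos rfl, (hμ i).2 hi]
  · rw [if_pos rfl]
    exact (hψ.eigenvalues_eq_one_or_eq_neg_one hψψ hdim i).resolve_left
      fun h => by have := (hμ i).1 h; omega

/-- The associated metric `g̃(x,y) = g(x, φ y) + η(x) η(y)` is a
nondegenerate symmetric bilinear form of signature `(n+1, n)`: there is a basis
`u₀, …, u_{2n}` of `V` that is `g̃`-orthogonal, with `g̃(uᵢ,uᵢ) = 1` for
`0 ≤ i ≤ n` and `g̃(uᵢ,uᵢ) = −1` for `n+1 ≤ i ≤ 2n`. -/
theorem associated_metric_signature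
    {n : ℕ} (hn : 0 < n) {V : Type*} [NormedAddCommGroup V]
    [InnerProductSpace ℝ V] [FiniteDimensional ℝ V]
    (hdim : Module.finrank ℝ V = 2 * n + 1)
    (φ : V →ₗ[ℝ] V) (ξ : V) (η : V →ₗ[ℝ] ℝ)
    (hφξ : φ ξ = 0)
    (hφφ : ∀ x : V, φ (φ x) = x - η x • ξ)
    (hηφ : ∀ x : V, η (φ x) = 0)
    (hηξ : η ξ = 1)
    (htr : LinearMap.trace ℝ V φ = 0)
    (hgφ : ∀ x y : V, ⟪φ x, φ y⟫ = ⟪x, y⟫ - η x * η y)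
    (hgξ : ∀ x : V, ⟪x, ξ⟫ = η x)
    (gt : V → V → ℝ)
    (hgt : ∀ x y : V, gt x y = ⟪x, φ y⟫ + η x * η y) :
    ∃ u : Module.Basis (Fin (2 * n + 1)) ℝ V,
      (∀ i j : Fin (2 * n + 1), i ≠ j → gt (u i) (u j) = 0) ∧
      (∀ i : Fin (2 * n + 1), (i : ℕ) ≤ n → gt (u i) (u i) = 1) ∧
      (∀ i : Fin (2 * n + 1), n + 1 ≤ (i : ℕ) → gt (u i) (u i) = -1) :=
  associated_metric_signature_general hdim φ ξ η hφξ hφφ hηφ hηξ htr hgφ hgξ gt hgt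
end

section
/- Let (φ,ξ,η) be an almost paracontact almost paracomplex Riemannian structure on a real inner product space (V,g) of dimension 2n+1 and let F be a compatible fundamental tensor. Let s : V → V be the unique linear map with g(s(x),y) = −F(x,φy,ξ) for all x,y, and define N(x,y,z) = F(x,y,z) + η(y)·g(φ(s(x)),z) − η(z)·F(x,y,ξ). Then N(x,y,z) = 0 for all x,y,z ∈ V if and only if F(x,y,z) = F(x,y,ξ)η(z) + F(x,z,ξ)η(y) for all x,y,z ∈ V. (N is the (0,3)-form of ∇∥φ, so this is the pointwise content of the theorem that the Schouten–van Kampen connection ∇∥ is natural for (φ,ξ,η,g) exactly on the class F₄⊕⋯⊕F₉⊕F₁₁.) -/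
open RealInnerProductSpace

/-- With `s` the unique linear map satisfying `g(s(x),y) = −F(x,φy,ξ)`
and `N(x,y,z) = F(x,y,z) + η(y)·g(φ(s x), z) − η(z)·F(x,y,ξ)` (the (0,3)-form of
`∇∥φ`), one has `N ≡ 0` if and only if
`F(x,y,z) = F(x,y,ξ)η(z) + F(x,z,ξ)η(y)` for all `x, y, z`. -/
theorem svk_natural_iff
    {n : ℕ} (hn : 0 < n) {V : Type*} [NormedAddCommGroup V]
    [InnerProductSpace ℝ V] [FiniteDimensional ℝ V]
    (hdim : Module.finrank ℝ V = 2 * n + 1)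
    (φ : V →ₗ[ℝ] V) (ξ : V) (η : V →ₗ[ℝ] ℝ)
    (hφξ : φ ξ = 0)
    (hφφ : ∀ x : V, φ (φ x) = x - η x • ξ)
    (hηφ : ∀ x : V, η (φ x) = 0)
    (hηξ : η ξ = 1)
    (htr : LinearMap.trace ℝ V φ = 0)
    (hgφ : ∀ x y : V, ⟪φ x, φ y⟫ = ⟪x, y⟫ - η x * η y)
    (hgξ : ∀ x : V, ⟪x, ξ⟫ = η x)
    (F : V →ₗ[ℝ] V →ₗ[ℝ] V →ₗ[ℝ] ℝ)
    (hFsymm : ∀ x y z : V, F x y z = F x z y)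
    (hFcompat : ∀ x y z : V,
      F x y z = -F x (φ y) (φ z) + η y * F x ξ z + η z * F x y ξ)
    (s : V →ₗ[ℝ] V)
    (hs : ∀ x y : V, ⟪s x, y⟫ = -F x (φ y) ξ)
    (N : V → V → V → ℝ)
    (hN : ∀ x y z : V,
      N x y z = F x y z + η y * ⟪φ (s x), z⟫ - η z * F x y ξ) :
    (∀ x y z : V, N x y z = 0) ↔
    (∀ x y z : V, F x y z = F x y ξ * η z + F x z ξ * η y) := by
  have hφsym : ∀ x y : V, ⟪φ x, y⟫ = ⟪x, φ y⟫ := by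
    intro x y
    have h := hgφ x (φ y)
    rw [hφφ, inner_sub_right, real_inner_smul_right, hgξ, hηφ, hηφ] at h
    linarith
  have hFξξ : ∀ x : V, F x ξ ξ = 0 := by
    intro x
    have h := hFcompat x ξ ξ
    simp [hφξ, hηξ] at h
    linarith
  have hkey : ∀ x z : V, ⟪φ (s x), z⟫ = -F x z ξ := by
    intro x z
    rw [hφsym (s x) z, hs x (φ z), hφφ, map_sub, map_smul]
    simp [hFξξ x]
  constructor
  · intro h x y z
    have h0 := h x y z
    rw [hN, hkey] at h0
    linear_combination h0
  · intro h x y z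
    rw [hN, hkey x z, h x y z]
    ring
end

section
/- Let (φ,ξ,η) be an almost paracontact almost paracomplex Riemannian structure on a real inner product space (V,g) of dimension 2n+1, let F be a compatible fundamental tensor, and let Φ be the associated potential tensor. Then for every orthonormal basis e₀, e₁, …, e_{2n} of (V,g), the trace ∑_{i=0}^{2n} Φ(ξ, e_i, e_i) equals 0. -/
/-!
Along `x = ξ` the potential tensor reduces, by `φ ξ = 0` and the compatibility of `F`, to
`2 Φ(ξ, y, y) = η(y) F(ξ, ξ, φ y) - η(y) F(ξ, ξ, y) + B(y, φ y) - B(φ y, y) - B(y, y) + B(φ y, φ y)`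
with `B(x, y) = F(x, y, ξ)`. Summed over an orthonormal basis the `η`-weighted terms become
`F(ξ, ξ, φ ξ)` and `F(ξ, ξ, ξ)`, which vanish, and since `φ` is symmetric with `φ² = 1 - η ⊗ ξ`
the `B`-terms cancel in pairs.
-/

open RealInnerProductSpace

section

variable {V : Type*} [NormedAddCommGroup V] [InnerProductSpace ℝ V]

namespace OrthonormalBasis

variable {ι : Type*} [Fintype ι]

theorem sum_inner_mul_apply (e : OrthonormalBasis ι ℝ V) (f : V →ₗ[ℝ] ℝ) (x : V) :
    ∑ i, ⟪e i, x⟫ * f (e i) = f x := by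
  conv_rhs => rw [← e.sum_repr' x]
  simp [map_sum]

theorem sum_apply_apply_of_isSymmetric (e : OrthonormalBasis ι ℝ V) (B : V →ₗ[ℝ] V →ₗ[ℝ] ℝ)
    {T : V →ₗ[ℝ] V} (hT : T.IsSymmetric) :
    ∑ i, B (T (e i)) (e i) = ∑ i, B (e i) (T (e i)) :=
  calc ∑ i, B (T (e i)) (e i)
      = ∑ i, ∑ j, ⟪e j, T (e i)⟫ * B (e j) (e i) :=
        Finset.sum_congr rfl fun i _ => (e.sum_inner_mul_apply (B.flip (e i)) _).symm
    _ = ∑ j, ∑ i, ⟪e i, T (e j)⟫ * B (e j) (e i) := by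
        rw [Finset.sum_comm]
        refine Finset.sum_congr rfl fun j _ => Finset.sum_congr rfl fun i _ => ?_
        rw [← hT, real_inner_comm]
    _ = ∑ j, B (e j) (T (e j)) :=
        Finset.sum_congr rfl fun j _ => e.sum_inner_mul_apply (B (e j)) _

end OrthonormalBasis

variable {φ : V →ₗ[ℝ] V} {ξ : V} {η : V →ₗ[ℝ] ℝ} {F : V →ₗ[ℝ] V →ₗ[ℝ] V →ₗ[ℝ] ℝ}

theorem isSymmetric_of_paracontact (hφφ : ∀ x, φ (φ x) = x - η x • ξ)
    (hηφ : ∀ x, η (φ x) = 0) (hgφ : ∀ x y, ⟪φ x, φ y⟫ = ⟪x, y⟫ - η x * η y)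
    (hgξ : ∀ x, ⟪x, ξ⟫ = η x) : φ.IsSymmetric := by
  intro x y
  have h := hgφ (φ x) y
  have hξφ : ⟪ξ, φ y⟫ = 0 := by rw [real_inner_comm, hgξ, hηφ]
  rw [hφφ, hηφ, inner_sub_left, real_inner_smul_left, hξφ] at h
  linarith

theorem apply_apply_xi_xi_eq_zero (hφξ : φ ξ = 0) (hηξ : η ξ = 1)
    (hFcompat : ∀ x y z, F x y z = -F x (φ y) (φ z) + η y * F x ξ z + η z * F x y ξ)
    (x : V) : F x ξ ξ = 0 := by
  have h := hFcompat x ξ ξ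
  rw [hφξ, hηξ, map_zero] at h
  linarith

theorem apply_apply_self_phi (hφφ : ∀ x, φ (φ x) = x - η x • ξ) (hηφ : ∀ x, η (φ x) = 0)
    (hFsymm : ∀ x y z, F x y z = F x z y)
    (hFcompat : ∀ x y z, F x y z = -F x (φ y) (φ z) + η y * F x ξ z + η z * F x y ξ)
    (x y : V) : F x y (φ y) = η y * F x ξ (φ y) := by
  have h := hFcompat x y (φ y)
  rw [hφφ, hηφ, map_sub, map_smul, smul_eq_mul, hFsymm x (φ y) y, hFsymm x (φ y) ξ] at h
  linarith

noncomputable def potentialTensor (F : V →ₗ[ℝ] V →ₗ[ℝ] V →ₗ[ℝ] ℝ) (φ : V →ₗ[ℝ] V) (ξ : V)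
    (η : V →ₗ[ℝ] ℝ) (x y z : V) : ℝ :=
  (F x y (φ z) + F y x (φ z) - F (φ z) x y
    - η x * (F y z ξ - F (φ z) (φ y) ξ)
    - η y * (F x z ξ - F (φ z) (φ x) ξ)
    - η z * (F ξ x y - F x y ξ + F x (φ y) ξ - F ξ ξ (φ x) * η y
             - F y x ξ + F y (φ x) ξ - F ξ ξ (φ y) * η x)) / 2

section Paracontact

variable (hφξ : φ ξ = 0) (hφφ : ∀ x, φ (φ x) = x - η x • ξ) (hηφ : ∀ x, η (φ x) = 0)
  (hηξ : η ξ = 1) (hFsymm : ∀ x y z, F x y z = F x z y)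
  (hFcompat : ∀ x y z, F x y z = -F x (φ y) (φ z) + η y * F x ξ z + η z * F x y ξ)
include hφξ hφφ hηφ hηξ hFsymm hFcompat

theorem two_mul_potentialTensor_xi_self (y : V) :
    2 * potentialTensor F φ ξ η ξ y y =
      η y * F ξ ξ (φ y) - η y * F ξ ξ y
        + F y (φ y) ξ - F (φ y) y ξ - F y y ξ + F (φ y) (φ y) ξ := by
  have hξξ := apply_apply_xi_xi_eq_zero hφξ hηξ hFcompat
  have hself := apply_apply_self_phi hφφ hηφ hFsymm hFcompat
  simp only [potentialTensor, hφξ, hηξ, map_zero, LinearMap.zero_apply]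
  rw [hself, hFsymm ξ y ξ, hFsymm ξ (φ y) ξ, hξξ, hFsymm y ξ (φ y), hFsymm (φ y) ξ y]
  ring

theorem sum_potentialTensor_xi_self {ι : Type*} [Fintype ι]
    (hgφ : ∀ x y, ⟪φ x, φ y⟫ = ⟪x, y⟫ - η x * η y) (hgξ : ∀ x, ⟪x, ξ⟫ = η x)
    (e : OrthonormalBasis ι ℝ V) :
    ∑ i, potentialTensor F φ ξ η ξ (e i) (e i) = 0 := by
  have hξξ := apply_apply_xi_xi_eq_zero hφξ hηξ hFcompat
  have hsymm := isSymmetric_of_paracontact hφφ hηφ hgφ hgξ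
  have hη : ∀ i, η (e i) = ⟪e i, ξ⟫ := fun i => (hgξ _).symm
  let B : V →ₗ[ℝ] V →ₗ[ℝ] ℝ := F.compr₂ (LinearMap.applyₗ ξ)
  have hηφ_sum : ∑ i, η (e i) * F ξ ξ (φ (e i)) = 0 := by
    simpa [hη, hφξ] using e.sum_inner_mul_apply ((F ξ ξ).comp φ) ξ
  have hη_sum : ∑ i, η (e i) * F ξ ξ (e i) = 0 := by
    simpa [hη, hξξ] using e.sum_inner_mul_apply (F ξ ξ) ξ
  have hswap : ∑ i, F (φ (e i)) (e i) ξ = ∑ i, F (e i) (φ (e i)) ξ := by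
    simpa [B] using e.sum_apply_apply_of_isSymmetric B hsymm
  have hphi_phi : ∑ i, F (φ (e i)) (φ (e i)) ξ = ∑ i, F (e i) (e i) ξ := by
    simpa [B, hφφ, hξξ] using e.sum_apply_apply_of_isSymmetric (B.compl₂ φ) hsymm
  have h := Finset.mul_sum Finset.univ (fun i => potentialTensor F φ ξ η ξ (e i) (e i)) 2
  simp only [two_mul_potentialTensor_xi_self hφξ hφφ hηφ hηξ hFsymm hFcompat,
    Finset.sum_add_distrib, Finset.sum_sub_distrib, hηφ_sum, hη_sum, hswap, hphi_phi] at h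
  linarith

end Paracontact

end

theorem potential_tensor_trace_zero_general
    {n : ℕ} {V : Type*} [NormedAddCommGroup V]
    [InnerProductSpace ℝ V]
    (φ : V →ₗ[ℝ] V) (ξ : V) (η : V →ₗ[ℝ] ℝ)
    (hφξ : φ ξ = 0)
    (hφφ : ∀ x : V, φ (φ x) = x - η x • ξ)
    (hηφ : ∀ x : V, η (φ x) = 0)
    (hηξ : η ξ = 1)
    (hgφ : ∀ x y : V, ⟪φ x, φ y⟫ = ⟪x, y⟫ - η x * η y)
    (hgξ : ∀ x : V, ⟪x, ξ⟫ = η x)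
    (F : V →ₗ[ℝ] V →ₗ[ℝ] V →ₗ[ℝ] ℝ)
    (hFsymm : ∀ x y z : V, F x y z = F x z y)
    (hFcompat : ∀ x y z : V,
      F x y z = -F x (φ y) (φ z) + η y * F x ξ z + η z * F x y ξ)
    (Φ : V → V → V → ℝ)
    (hΦ : ∀ x y z : V, 2 * Φ x y z =
      F x y (φ z) + F y x (φ z) - F (φ z) x y
      - η x * (F y z ξ - F (φ z) (φ y) ξ)
      - η y * (F x z ξ - F (φ z) (φ x) ξ)
      - η z * (F ξ x y - F x y ξ + F x (φ y) ξ - F ξ ξ (φ x) * η y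
               - F y x ξ + F y (φ x) ξ - F ξ ξ (φ y) * η x)) :
    ∀ e : OrthonormalBasis (Fin (2 * n + 1)) ℝ V,
      ∑ i : Fin (2 * n + 1), Φ ξ (e i) (e i) = 0 := by
  have hΦ_eq : Φ = potentialTensor F φ ξ η := by
    ext x y z
    rw [potentialTensor, ← hΦ]
    ring
  rw [hΦ_eq]
  exact sum_potentialTensor_xi_self hφξ hφφ hηφ hηξ hFsymm hFcompat hgφ hgξ

/-- For every orthonormal basis `e₀, …, e_{2n}` of `(V,g)` the trace
`∑ᵢ Φ(ξ, eᵢ, eᵢ)` of the potential tensor `Φ` vanishes. -/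
theorem potential_tensor_trace_zero
    {n : ℕ} (hn : 0 < n) {V : Type*} [NormedAddCommGroup V]
    [InnerProductSpace ℝ V] [FiniteDimensional ℝ V]
    (hdim : Module.finrank ℝ V = 2 * n + 1)
    (φ : V →ₗ[ℝ] V) (ξ : V) (η : V →ₗ[ℝ] ℝ)
    (hφξ : φ ξ = 0)
    (hφφ : ∀ x : V, φ (φ x) = x - η x • ξ)
    (hηφ : ∀ x : V, η (φ x) = 0)
    (hηξ : η ξ = 1)
    (htr : LinearMap.trace ℝ V φ = 0)
    (hgφ : ∀ x y : V, ⟪φ x, φ y⟫ = ⟪x, y⟫ - η x * η y)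
    (hgξ : ∀ x : V, ⟪x, ξ⟫ = η x)
    (F : V →ₗ[ℝ] V →ₗ[ℝ] V →ₗ[ℝ] ℝ)
    (hFsymm : ∀ x y z : V, F x y z = F x z y)
    (hFcompat : ∀ x y z : V,
      F x y z = -F x (φ y) (φ z) + η y * F x ξ z + η z * F x y ξ)
    (Φ : V → V → V → ℝ)
    (hΦ : ∀ x y z : V, 2 * Φ x y z =
      F x y (φ z) + F y x (φ z) - F (φ z) x y
      - η x * (F y z ξ - F (φ z) (φ y) ξ)
      - η y * (F x z ξ - F (φ z) (φ x) ξ)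
      - η z * (F ξ x y - F x y ξ + F x (φ y) ξ - F ξ ξ (φ x) * η y
               - F y x ξ + F y (φ x) ξ - F ξ ξ (φ y) * η x)) :
    ∀ e : OrthonormalBasis (Fin (2 * n + 1)) ℝ V,
      ∑ i : Fin (2 * n + 1), Φ ξ (e i) (e i) = 0 :=
  potential_tensor_trace_zero_general φ ξ η hφξ hφφ hηφ hηξ hgφ hgξ F hFsymm hFcompat Φ hΦ
end

section
/- Let V = ℝ³ with basis E₀, E₁, E₂, inner product g making this basis orthonormal, Lie bracket [E₀,E₁] = −a₁E₁ − a₂E₂, [E₀,E₂] = −a₂E₁ + a₁E₂, [E₁,E₂] = 0, structure φE₀ = 0, φE₁ = E₂, φE₂ = E₁, ξ = E₀, η the dual functional of E₀, and ∇ given by the Koszul formula 2g(∇_x y, z) = g([x,y],z) − g([y,z],x) + g([z,x],y). Define the trilinear map F(x,y,z) = g(∇_x(φy) − φ(∇_x y), z). Then: (1) F satisfies F(x,y,z) = F(x,y,ξ)η(z) + F(x,z,ξ)η(y) for all x,y,z (so F lies in the class F₄⊕F₉); (2) F satisfies the defining identity of the class F₄, namely F(x,y,z) = (θ/2)·{g(φx,φy)η(z)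 + g(φx,φz)η(y)} for all x,y,z where θ = ∑_{i=0}^{2} F(E_i,E_i,ξ), if and only if a₁ = 0; (3) F satisfies the defining identities of the class F₉, namely F(x,y,z) = F(x,y,ξ)η(z) + F(x,z,ξ)η(y) together with F(x,y,ξ) = −F(y,x,ξ) = −F(φx,φy,ξ) for all x,y,z, if and only if a₂ = 0; (4) F = 0 if and only if a₁ = a₂ = 0. -/
open RealInnerProductSpace

/-- Classification of the 3-dimensional Lie group example: with
`F(x,y,z) = g(∇ₓ(φy) − φ(∇ₓy), z)` and `θ = ∑ᵢ F(Eᵢ,Eᵢ,ξ)`, one has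
(1) `F(x,y,z) = F(x,y,ξ)η(z) + F(x,z,ξ)η(y)` (class `F₄⊕F₉`);
(2) the `F₄` identity holds iff `a₁ = 0`;
(3) the `F₉` identities hold iff `a₂ = 0`;
(4) `F = 0` iff `a₁ = a₂ = 0`. -/
theorem lie_group_example_classification
    (a₁ a₂ : ℝ)
    (E : Fin 3 → EuclideanSpace ℝ (Fin 3))
    (hE : ∀ j : Fin 3, E j = EuclideanSpace.single j (1 : ℝ))
    (br : EuclideanSpace ℝ (Fin 3) →ₗ[ℝ] EuclideanSpace ℝ (Fin 3) →ₗ[ℝ]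
      EuclideanSpace ℝ (Fin 3))
    (hanti : ∀ x y, br x y = -br y x)
    (h01 : br (E 0) (E 1) = -a₁ • E 1 - a₂ • E 2)
    (h02 : br (E 0) (E 2) = -a₂ • E 1 + a₁ • E 2)
    (h12 : br (E 1) (E 2) = 0)
    (φ : EuclideanSpace ℝ (Fin 3) →ₗ[ℝ] EuclideanSpace ℝ (Fin 3))
    (hφ0 : φ (E 0) = 0) (hφ1 : φ (E 1) = E 2) (hφ2 : φ (E 2) = E 1)
    (ξ : EuclideanSpace ℝ (Fin 3)) (hξ : ξ = E 0)
    (η : EuclideanSpace ℝ (Fin 3) →ₗ[ℝ] ℝ)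
    (hη0 : η (E 0) = 1) (hη1 : η (E 1) = 0) (hη2 : η (E 2) = 0)
    (nab : EuclideanSpace ℝ (Fin 3) → EuclideanSpace ℝ (Fin 3) →
      EuclideanSpace ℝ (Fin 3))
    (hKoszul : ∀ x y z, 2 * ⟪nab x y, z⟫ =
      ⟪br x y, z⟫ - ⟪br y z, x⟫ + ⟪br z x, y⟫)
    (F : EuclideanSpace ℝ (Fin 3) → EuclideanSpace ℝ (Fin 3) →
      EuclideanSpace ℝ (Fin 3) → ℝ)
    (hF : ∀ x y z, F x y z = ⟪nab x (φ y) - φ (nab x y), z⟫)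
    (θ : ℝ)
    (hθ : θ = ∑ i : Fin 3, F (E i) (E i) ξ) :
    (∀ x y z, F x y z = F x y ξ * η z + F x z ξ * η y) ∧
    ((∀ x y z, F x y z =
        (θ / 2) * (⟪φ x, φ y⟫ * η z + ⟪φ x, φ z⟫ * η y)) ↔ a₁ = 0) ∧
    (((∀ x y z, F x y z = F x y ξ * η z + F x z ξ * η y) ∧
      (∀ x y, F x y ξ = -F y x ξ) ∧
      (∀ x y, -F y x ξ = -F (φ x) (φ y) ξ)) ↔ a₂ = 0) ∧
    ((∀ x y z, F x y z = 0) ↔ (a₁ = 0 ∧ a₂ = 0)) := by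

  -- coordinates of the basis vectors
  have hEc : ∀ j i : Fin 3, E j i = if i = j then (1:ℝ) else 0 := by
    intro j i; rw [hE]; exact EuclideanSpace.single_apply j 1 i
  -- expansion of an arbitrary vector in the basis
  have hexp : ∀ v : EuclideanSpace ℝ (Fin 3), v = v 0 • E 0 + v 1 • E 1 + v 2 • E 2 := by
    intro v
    refine PiLp.ext fun i => ?_
    fin_cases i <;>
      simp [hEc, PiLp.add_apply, PiLp.smul_apply]
  have hEinner : ∀ (j : Fin 3) (v : EuclideanSpace ℝ (Fin 3)), ⟪E j, v⟫ = v j := by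
    intro j v; rw [hE]; simp [EuclideanSpace.inner_single_left]
  have hEinner' : ∀ (j : Fin 3) (v : EuclideanSpace ℝ (Fin 3)), ⟪v, E j⟫ = v j := by
    intro j v; rw [real_inner_comm]; exact hEinner j v
  -- bracket values
  have h00 : ∀ v, br v v = 0 := by
    intro v
    have h := hanti v v
    have h2 : br v v + br v v = 0 := by nth_rewrite 1 [h]; abel
    have h3 : (2:ℝ) • br v v = 0 := (two_smul ℝ (br v v)).trans h2
    simpa using h3
  have h10 : br (E 1) (E 0) = a₁ • E 1 + a₂ • E 2 := by
    rw [hanti, h01]; module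
  have h20 : br (E 2) (E 0) = a₂ • E 1 - a₁ • E 2 := by
    rw [hanti, h02]; module
  have h21 : br (E 2) (E 1) = 0 := by
    rw [hanti, h12]; simp
  -- inner products with brackets
  have hbrc : ∀ x y z : EuclideanSpace ℝ (Fin 3), ⟪br x y, z⟫ =
      (x 0 * y 1 - x 1 * y 0) * (-(a₁ * z 1) - a₂ * z 2)
        + (x 0 * y 2 - x 2 * y 0) * (-(a₂ * z 1) + a₁ * z 2) := by
    intro x y z
    conv_lhs => rw [hexp x, hexp y]
    simp only [map_add, map_smul, LinearMap.add_apply, LinearMap.smul_apply,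
      h01, h02, h12, h10, h20, h21, h00, smul_zero, add_zero, zero_add,
      inner_add_left, real_inner_smul_left, inner_sub_left, inner_neg_left,
      inner_zero_left, hEinner]
    ring
  -- Koszul: inner products with nab
  have hN : ∀ x y z : EuclideanSpace ℝ (Fin 3), ⟪nab x y, z⟫ =
      (((x 0 * y 1 - x 1 * y 0) * (-(a₁ * z 1) - a₂ * z 2)
          + (x 0 * y 2 - x 2 * y 0) * (-(a₂ * z 1) + a₁ * z 2))
        - ((y 0 * z 1 - y 1 * z 0) * (-(a₁ * x 1) - a₂ * x 2)
          + (y 0 * z 2 - y 2 * z 0) * (-(a₂ * x 1) + a₁ * x 2))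
        + ((z 0 * x 1 - z 1 * x 0) * (-(a₁ * y 1) - a₂ * y 2)
          + (z 0 * x 2 - z 2 * x 0) * (-(a₂ * y 1) + a₁ * y 2))) / 2 := by
    intro x y z
    have h := hKoszul x y z
    rw [hbrc x y z, hbrc y z x, hbrc z x y] at h
    linarith
  -- phi
  have hφv : ∀ v : EuclideanSpace ℝ (Fin 3), φ v = v 1 • E 2 + v 2 • E 1 := by
    intro v
    conv_lhs => rw [hexp v]
    simp only [map_add, map_smul, hφ0, hφ1, hφ2, smul_zero, zero_add]
  have hφ0c : ∀ v : EuclideanSpace ℝ (Fin 3), (φ v) 0 = 0 := by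
    intro v; rw [hφv]; simp [hEc, PiLp.add_apply, PiLp.smul_apply]
  have hφ1c : ∀ v : EuclideanSpace ℝ (Fin 3), (φ v) 1 = v 2 := by
    intro v; rw [hφv]; simp [hEc, PiLp.add_apply, PiLp.smul_apply]
  have hφ2c : ∀ v : EuclideanSpace ℝ (Fin 3), (φ v) 2 = v 1 := by
    intro v; rw [hφv]; simp [hEc, PiLp.add_apply, PiLp.smul_apply]
  have hφinner : ∀ w z : EuclideanSpace ℝ (Fin 3), ⟪φ w, z⟫ = w 1 * z 2 + w 2 * z 1 := by
    intro w z
    rw [hφv]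
    simp only [inner_add_left, real_inner_smul_left, hEinner]
  have hφφ : ∀ x y : EuclideanSpace ℝ (Fin 3), ⟪φ x, φ y⟫ = x 1 * y 1 + x 2 * y 2 := by
    intro x y
    rw [hφinner, hφ1c, hφ2c]
  -- eta
  have hηv : ∀ v : EuclideanSpace ℝ (Fin 3), η v = v 0 := by
    intro v
    conv_lhs => rw [hexp v]
    simp [hη0, hη1, hη2]
  -- master formula for F
  have hFm : ∀ x y z : EuclideanSpace ℝ (Fin 3), F x y z =
      a₁ * ((x 2 * y 1 - x 1 * y 2) * z 0 + (x 2 * z 1 - x 1 * z 2) * y 0)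
        - a₂ * ((x 1 * y 1 + x 2 * y 2) * z 0 + (x 1 * z 1 + x 2 * z 2) * y 0) := by
    intro x y z
    rw [hF, inner_sub_left, hφinner (nab x y) z,
      ← hEinner' 1 (nab x y), ← hEinner' 2 (nab x y),
      hN x (φ y) z, hN x y (E 1), hN x y (E 2)]
    simp only [hφ0c, hφ1c, hφ2c]
    simp [hEc]
    ring
  have hθv : θ = -2 * a₂ := by
    rw [hθ, Fin.sum_univ_three, hFm, hFm, hFm, hξ]
    simp [hEc]
    ring
  -- coordinates of ξ
  have hξ0 : ξ 0 = 1 := by rw [hξ]; simp [hEc]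
  have hξ1 : ξ 1 = 0 := by rw [hξ]; simp [hEc]
  have hξ2 : ξ 2 = 0 := by rw [hξ]; simp [hEc]
  have part1 : ∀ x y z, F x y z = F x y ξ * η z + F x z ξ * η y := by
    intro x y z
    rw [hFm x y z, hFm x y ξ, hFm x z ξ, hηv, hηv, hξ0, hξ1, hξ2]
    ring
  refine ⟨part1, ?_, ?_, ?_⟩
  · constructor
    · intro h
      have h1 := h (E 2) (E 1) (E 0)
      rw [hFm, hφφ, hφφ, hηv, hηv, hθv] at h1
      simp [hEc] at h1
      linarith
    · intro ha1
      intro x y z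
      rw [hFm, hφφ, hφφ, hηv, hηv, hθv, ha1]
      ring
  · constructor
    · rintro ⟨-, h2, -⟩
      have h1 := h2 (E 1) (E 1)
      rw [hFm] at h1
      simp [hEc, hξ0, hξ1, hξ2] at h1
      linarith
    · intro ha2
      refine ⟨part1, ?_, ?_⟩
      · intro x y
        rw [hFm, hFm, hξ0, hξ1, hξ2, ha2]
        ring
      · intro x y
        rw [hFm y x ξ, hFm (φ x) (φ y) ξ]
        simp only [hφ0c, hφ1c, hφ2c, hξ0, hξ1, hξ2]
        ring
  · constructor
    · intro h
      have h1 := h (E 2) (E 1) (E 0)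
      have h2 := h (E 1) (E 1) (E 0)
      rw [hFm] at h1 h2
      simp [hEc] at h1 h2
      constructor <;> linarith
    · rintro ⟨ha1, ha2⟩ x y z
      rw [hFm, ha1, ha2]
      ring
end
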